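/- arXiv:2510.11025 — 4 statements merged into one kernel-verified Lean document; each statement's English description precedes it below -/
import Mathlib

section
/- Let H be a bounded self-adjoint operator on a complex Hilbert space ℋ, let 𝒦 be a complex Hilbert space, let F : ℋ → 𝒦 be a bounded linear operator, let λ ∈ ℝ, and let P be the orthogonal projection onto the eigenspace ker(H − λ·I). Then for every y > 0, the operator norm of the sandwiched resolvent satisfies ‖F ∘ (H − (λ+iy)·I)⁻¹ ∘ F*‖ ≥ ‖F ∘ P‖² / y. -/
/-!
Write `z = λ + iy`, `R = (H - z)⁻¹` and `P` for the projection onto `ker (H - λ)`. Since `H` is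
self-adjoint, `P` commutes with `H`, so `P (H - z) = (λ - z) P` and hence `‖P v‖ ≤ |y| ‖R v‖`.
On the other hand `Im ⟪(H - z) w, w⟫ = y ‖w‖²`, so `‖P v‖² ≤ y² ‖R v‖² = y Im ⟪v, R v⟫`. Taking
`v = F* u` turns `⟪v, R v⟫` into `⟪u, T u⟫`, giving `‖P F*‖² ≤ y ‖T‖`, and `‖P F*‖ = ‖F P‖`.
-/

open ContinuousLinearMap
open scoped InnerProductSpace

theorem ContinuousLinearMap.opNorm_sq_le_of_forall_norm_apply_sq_le
    {𝕜 E F : Type*} [NontriviallyNormedField 𝕜] [SeminormedAddCommGroup E]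
    [SeminormedAddCommGroup F] [NormedSpace 𝕜 E] [NormedSpace 𝕜 F] (f : E →L[𝕜] F) {C : ℝ}
    (hC : 0 ≤ C) (h : ∀ x, ‖f x‖ ^ 2 ≤ C * ‖x‖ ^ 2) : ‖f‖ ^ 2 ≤ C := by
  refine (Real.le_sqrt (norm_nonneg f) hC).mp (f.opNorm_le_bound (Real.sqrt_nonneg C) fun x => ?_)
  rw [← Real.sqrt_sq (norm_nonneg x), ← Real.sqrt_mul hC]
  exact Real.le_sqrt_of_sq_le (h x)

theorem ContinuousLinearMap.im_inner_apply_le {E : Type*} [NormedAddCommGroup E]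
    [InnerProductSpace ℂ E] (T : E →L[ℂ] E) (u : E) : (⟪u, T u⟫_ℂ).im ≤ ‖T‖ * ‖u‖ ^ 2 :=
  calc (⟪u, T u⟫_ℂ).im ≤ ‖⟪u, T u⟫_ℂ‖ := Complex.im_le_norm _
    _ ≤ ‖u‖ * ‖T u‖ := norm_inner_le_norm _ _
    _ ≤ ‖u‖ * (‖T‖ * ‖u‖) := by gcongr; exact T.le_opNorm u
    _ = ‖T‖ * ‖u‖ ^ 2 := by ring

theorem IsSelfAdjoint.isUnit_sub_smul_one {A : Type*} [CStarAlgebra A] {a : A}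
    (ha : IsSelfAdjoint a) {z : ℂ} (hz : z.im ≠ 0) : IsUnit (a - z • 1) := by
  have hz : z ∉ spectrum ℂ a := fun h => hz (ha.im_eq_zero_of_mem_spectrum h)
  simpa [Algebra.algebraMap_eq_smul_one] using (spectrum.notMem_iff.mp hz).neg

abbrev ContinuousLinearMap.eigenspace {E : Type*} [NormedAddCommGroup E] [InnerProductSpace ℂ E]
    (H : E →L[ℂ] E) (μ : ℂ) : Submodule ℂ E :=
  LinearMap.ker ((H - μ • (1 : E →L[ℂ] E) : E →L[ℂ] E) : E →ₗ[ℂ] E)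

namespace IsSelfAdjoint

variable {E : Type*} [NormedAddCommGroup E] [InnerProductSpace ℂ E] [CompleteSpace E]
  {H : E →L[ℂ] E}

theorem im_inner_sub_smul_one_apply_self (hH : IsSelfAdjoint H) (z : ℂ) (w : E) :
    (⟪(H - z • 1) w, w⟫_ℂ).im = z.im * ‖w‖ ^ 2 := by
  have hHw : (⟪H w, w⟫_ℂ).im = 0 := hH.isSymmetric.im_inner_apply_self w
  rw [sub_apply, smul_apply, one_apply_eq_self, inner_sub_left, inner_smul_left, Complex.sub_im,
    hHw, Complex.mul_im]
  simp [inner_self_eq_norm_sq_to_K, ← Complex.ofReal_pow, Complex.ofReal_re, Complex.ofReal_im]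

theorem sub_smul_one_apply_inverse_apply (hH : IsSelfAdjoint H) {z : ℂ} (hz : z.im ≠ 0) (v : E) :
    (H - z • 1) (Ring.inverse (H - z • 1) v) = v := by
  rw [← comp_apply, ← mul_def, Ring.mul_inverse_cancel _ (hH.isUnit_sub_smul_one hz),
    one_apply_eq_self]

theorem starProjection_eigenspace_comp (hH : IsSelfAdjoint H) (μ : ℝ) :
    (H.eigenspace μ).starProjection ∘L H = (μ : ℂ) • (H.eigenspace μ).starProjection := by
  set P := (H.eigenspace μ).starProjection
  have hHP : H ∘L P = (μ : ℂ) • P := ext fun v => by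
    have := (H.eigenspace μ).starProjection_apply_mem v
    rw [LinearMap.mem_ker] at this
    exact sub_eq_zero.mp this
  calc P ∘L H = adjoint (H ∘L P) := by
        rw [adjoint_comp, hH.adjoint_eq, (isSelfAdjoint_starProjection _).adjoint_eq]
    _ = (μ : ℂ) • P := by
        rw [hHP, map_smulₛₗ, (isSelfAdjoint_starProjection _).adjoint_eq, Complex.conj_ofReal]

theorem norm_starProjection_eigenspace_apply_le (hH : IsSelfAdjoint H) (μ : ℝ) {y : ℝ}
    (hy : y ≠ 0) (v : E) :
    ‖(H.eigenspace μ).starProjection v‖ ≤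
      |y| * ‖Ring.inverse (H - ((μ : ℂ) + y * Complex.I) • 1) v‖ := by
  set z : ℂ := (μ : ℂ) + y * Complex.I
  set P := (H.eigenspace μ).starProjection
  set w := Ring.inverse (H - z • 1) v
  have hz : z.im = y := by simp [z]
  have hPA : P ∘L (H - z • 1) = ((μ : ℂ) - z) • P := by
    rw [comp_sub, hH.starProjection_eigenspace_comp, comp_smul, ← mul_def, mul_one, sub_smul]
  calc ‖P v‖ = ‖((μ : ℂ) - z) • P w‖ := by
        rw [← hH.sub_smul_one_apply_inverse_apply (hz ▸ hy) v, ← comp_apply, hPA, smul_apply]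
    _ = |y| * ‖P w‖ := by simp [z, norm_smul]
    _ ≤ |y| * ‖w‖ := by gcongr; exact (H.eigenspace μ).norm_starProjection_apply_le w

theorem norm_starProjection_eigenspace_apply_sq_le (hH : IsSelfAdjoint H) (μ : ℝ) {y : ℝ}
    (hy : y ≠ 0) (v : E) :
    ‖(H.eigenspace μ).starProjection v‖ ^ 2 ≤
      y * (⟪v, Ring.inverse (H - ((μ : ℂ) + y * Complex.I) • 1) v⟫_ℂ).im := by
  set z : ℂ := (μ : ℂ) + y * Complex.I
  set w := Ring.inverse (H - z • 1) v
  have hz : z.im = y := by simp [z]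
  have him : (⟪v, w⟫_ℂ).im = y * ‖w‖ ^ 2 := by
    nth_rewrite 1 [← hH.sub_smul_one_apply_inverse_apply (hz ▸ hy) v]
    rw [hH.im_inner_sub_smul_one_apply_self, hz]
  calc ‖(H.eigenspace μ).starProjection v‖ ^ 2 ≤ (|y| * ‖w‖) ^ 2 :=
        pow_le_pow_left₀ (norm_nonneg _) (hH.norm_starProjection_eigenspace_apply_le μ hy v) 2
    _ = y * (⟪v, w⟫_ℂ).im := by rw [him, mul_pow, sq_abs]; ring

end IsSelfAdjoint

/-- For a bounded self-adjoint operator `H`, a bounded operator `F : ℋ → 𝒦`, a real `lam`,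
and the orthogonal projection `P` onto `ker (H - lam)`, for every `y > 0` the operator norm
of the sandwiched resolvent satisfies `‖F (H - (lam + i y))⁻¹ F*‖ ≥ ‖F ∘ P‖² / y`. -/
theorem sandwiched_resolvent_norm_lower_bound
    {ℋ : Type*} [NormedAddCommGroup ℋ] [InnerProductSpace ℂ ℋ] [CompleteSpace ℋ]
    {𝒦 : Type*} [NormedAddCommGroup 𝒦] [InnerProductSpace ℂ 𝒦] [CompleteSpace 𝒦]
    (H : ℋ →L[ℂ] ℋ) (hH : IsSelfAdjoint H) (F : ℋ →L[ℂ] 𝒦) (lam : ℝ)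
    (P : ℋ →L[ℂ] ℋ)
    (hP : P = (LinearMap.ker ((H - (lam : ℂ) • (1 : ℋ →L[ℂ] ℋ) : ℋ →L[ℂ] ℋ) : ℋ →ₗ[ℂ] ℋ)).subtypeL ∘L
        Submodule.orthogonalProjectionOnto
          (LinearMap.ker ((H - (lam : ℂ) • (1 : ℋ →L[ℂ] ℋ) : ℋ →L[ℂ] ℋ) : ℋ →ₗ[ℂ] ℋ))) :
    ∀ y : ℝ, 0 < y →
      ‖F ∘L P‖ ^ 2 / y ≤
        ‖F ∘L Ring.inverse (H - ((lam : ℂ) + y * Complex.I) • (1 : ℋ →L[ℂ] ℋ)) ∘L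
          adjoint F‖ := by
  intro y hy
  replace hP : P = (H.eigenspace lam).starProjection := hP
  set T := F ∘L Ring.inverse (H - ((lam : ℂ) + y * Complex.I) • (1 : ℋ →L[ℂ] ℋ)) ∘L adjoint F
  have hPF : ∀ u, ‖(P ∘L adjoint F) u‖ ^ 2 ≤ y * ‖T‖ * ‖u‖ ^ 2 := fun u =>
    calc ‖P (adjoint F u)‖ ^ 2
        ≤ y * (⟪adjoint F u, Ring.inverse (H - ((lam : ℂ) + y * Complex.I) • 1)
            (adjoint F u)⟫_ℂ).im := hP ▸ hH.norm_starProjection_eigenspace_apply_sq_le lam hy.ne' _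
      _ = y * (⟪u, T u⟫_ℂ).im := by rw [adjoint_inner_left]; rfl
      _ ≤ y * ‖T‖ * ‖u‖ ^ 2 := by rw [mul_assoc]; gcongr; exact T.im_inner_apply_le u
  have hFP : ‖F ∘L P‖ = ‖P ∘L adjoint F‖ := by
    rw [← adjoint.norm_map, adjoint_comp, hP, (isSelfAdjoint_starProjection _).adjoint_eq]
  rw [div_le_iff₀ hy, hFP, mul_comm]
  exact (P ∘L adjoint F).opNorm_sq_le_of_forall_norm_apply_sq_le (by positivity) hPF
end

section
/- Let H be a bounded self-adjoint operator on a complex Hilbert space ℋ and let λ be an isolated point of the spectrum of H, i.e. λ ∈ spectrum(H) and there exists ε > 0 such that spectrum(H) ∩ (λ−ε, λ+ε) = {λ}. Then λ is an eigenvalue of H: ker(H − λ·I) ≠ {0}. -/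
open ContinuousLinearMap Filter Topology

/-! For the indicator `χ` of `{λ}`, the isolation of `λ` in the spectrum makes `χ` continuous there,
so `P = χ(H)` is defined by the continuous functional calculus. Since `(x - λ) χ(x) = 0`, we get
`(H - λ) P = 0`, and `P ≠ 0` because `χ(λ) = 1` with `λ` in the spectrum. Any nonzero vector in
the range of `P` is then an eigenvector. -/

theorem continuousOn_indicator_singleton {X M : Type*} [TopologicalSpace X] [T1Space X]
    [TopologicalSpace M] [Zero M] {s : Set X} {x : X} (f : X → M)
    (hx : ∀ᶠ y in 𝓝[s] x, y = x) : ContinuousOn (({x} : Set X).indicator f) s := by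
  intro y _
  rcases eq_or_ne y x with rfl | hne
  · exact (tendsto_pure_nhds _ y).mono_left (le_pure_iff.mpr hx)
  · refine ((continuousAt_const (y := 0)).congr ?_).continuousWithinAt
    filter_upwards [isOpen_ne.mem_nhds hne] with z hz
    exact (Set.indicator_of_notMem (Set.notMem_singleton_iff.mpr hz) f).symm

section IsolatedSpectralPoint

variable {R A : Type*} {p : A → Prop} [CommRing R] [StarRing R] [MetricSpace R]
  [IsTopologicalRing R] [ContinuousStar R] [TopologicalSpace A] [Ring A] [StarRing A]
  [Algebra R A] [ContinuousFunctionalCalculus R A p] {a : A} {x : R}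

theorem sub_algebraMap_mul_cfc_indicator_singleton (ha : p a)
    (hx : ∀ᶠ y in 𝓝[spectrum R a] x, y = x) :
    (a - algebraMap R A x) * cfc (({x} : Set R).indicator 1) a = 0 := by
  have hχ := continuousOn_indicator_singleton (1 : R → R) hx
  have hvanish : (fun y ↦ (y - x) * ({x} : Set R).indicator 1 y) = 0 := by
    funext y
    rcases eq_or_ne y x with rfl | hne
    · simp
    · simp [hne]
  calc (a - algebraMap R A x) * cfc (({x} : Set R).indicator 1) a
      = cfc (fun y ↦ (y - x) * ({x} : Set R).indicator 1 y) a := by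
        rw [cfc_mul _ _ a (by fun_prop) hχ, cfc_sub _ _ a, cfc_id' R a, cfc_const x a]
    _ = 0 := by rw [hvanish, cfc_zero]

theorem cfc_indicator_singleton_ne_zero [Nontrivial R] (ha : p a) (hmem : x ∈ spectrum R a)
    (hx : ∀ᶠ y in 𝓝[spectrum R a] x, y = x) :
    cfc (({x} : Set R).indicator 1) a ≠ 0 := by
  intro h
  have := eqOn_of_cfc_eq_cfc (h.trans (cfc_zero R a).symm)
    (continuousOn_indicator_singleton 1 hx) continuousOn_const ha hmem
  simp at this

end IsolatedSpectralPoint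

theorem eventually_nhdsWithin_spectrum_real_eq {A : Type*} [Ring A] [Algebra ℂ A] {a : A}
    {x ε : ℝ} (hε : 0 < ε)
    (hiso : spectrum ℂ a ∩ (Complex.ofReal '' Set.Ioo (x - ε) (x + ε)) = {(x : ℂ)}) :
    ∀ᶠ y in 𝓝[spectrum ℝ a] x, y = x := by
  rw [eventually_nhdsWithin_iff]
  filter_upwards [Ioo_mem_nhds (sub_lt_self x hε) (lt_add_of_pos_right x hε)] with y hy hspec
  have : (y : ℂ) ∈ spectrum ℂ a ∩ (Complex.ofReal '' Set.Ioo (x - ε) (x + ε)) :=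
    ⟨spectrum.algebraMap_mem ℂ hspec, y, hy, rfl⟩
  rw [hiso] at this
  exact Complex.ofReal_inj.mp this

theorem ContinuousLinearMap.ker_ne_bot_of_mul_eq_zero {R M : Type*} [Semiring R]
    [TopologicalSpace M] [AddCommMonoid M] [Module R M] {T P : M →L[R] M}
    (hTP : T * P = 0) (hP : P ≠ 0) : LinearMap.ker (T : M →ₗ[R] M) ≠ ⊥ := by
  intro hT
  have hrange : LinearMap.range (P : M →ₗ[R] M) ≤ LinearMap.ker (T : M →ₗ[R] M) :=
    LinearMap.range_le_ker_iff.mpr (congrArg toLinearMap hTP)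
  rw [hT, le_bot_iff, LinearMap.range_eq_bot] at hrange
  exact hP (coe_injective hrange)

theorem isolated_spectral_point_is_eigenvalue_general
    {ℋ : Type*} [NormedAddCommGroup ℋ] [InnerProductSpace ℂ ℋ] [CompleteSpace ℋ]
    (H : ℋ →L[ℂ] ℋ) (hH : IsSelfAdjoint H) (lam : ℝ)
    (hmem : (lam : ℂ) ∈ spectrum ℂ H)
    (hiso : ∃ ε > 0,
      spectrum ℂ H ∩ (Complex.ofReal '' Set.Ioo (lam - ε) (lam + ε)) = {(lam : ℂ)}) :
    LinearMap.ker ((H - (lam : ℂ) • (1 : ℋ →L[ℂ] ℋ) : ℋ →L[ℂ] ℋ) : ℋ →ₗ[ℂ] ℋ) ≠ ⊥ := by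
  obtain ⟨ε, hε, hspec⟩ := hiso
  have hisolated := eventually_nhdsWithin_spectrum_real_eq hε hspec
  have hscalar : algebraMap ℝ (ℋ →L[ℂ] ℋ) lam = (lam : ℂ) • 1 := by
    rw [Algebra.algebraMap_eq_smul_one, ← Complex.coe_smul]
  refine ker_ne_bot_of_mul_eq_zero ?_
    (cfc_indicator_singleton_ne_zero hH (spectrum.of_algebraMap_mem ℂ hmem) hisolated)
  rw [← hscalar]
  exact sub_algebraMap_mul_cfc_indicator_singleton hH hisolated

/-- An isolated point `lam` of the spectrum of a bounded self-adjoint operator `H` on a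
nontrivial complex Hilbert space is an eigenvalue: `ker (H - lam) ≠ ⊥`. -/
theorem isolated_spectral_point_is_eigenvalue
    {ℋ : Type*} [NormedAddCommGroup ℋ] [InnerProductSpace ℂ ℋ] [CompleteSpace ℋ]
    [Nontrivial ℋ]
    (H : ℋ →L[ℂ] ℋ) (hH : IsSelfAdjoint H) (lam : ℝ)
    (hmem : (lam : ℂ) ∈ spectrum ℂ H)
    (hiso : ∃ ε > 0,
      spectrum ℂ H ∩ (Complex.ofReal '' Set.Ioo (lam - ε) (lam + ε)) = {(lam : ℂ)}) :
    LinearMap.ker ((H - (lam : ℂ) • (1 : ℋ →L[ℂ] ℋ) : ℋ →L[ℂ] ℋ) : ℋ →ₗ[ℂ] ℋ) ≠ ⊥ :=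
  isolated_spectral_point_is_eigenvalue_general H hH lam hmem hiso
end

section
/- Let H be a bounded self-adjoint operator on a complex Hilbert space ℋ and let λ be an isolated point of the spectrum of H. Let V = ker(H − λ·I) be the eigenspace at λ and let K = V⊥ be its orthogonal complement. Then K is invariant under H, and λ does not belong to the spectrum of the restriction of H to K (viewed as a bounded operator on the Hilbert space K). -/
/-!
Since `λ` is isolated in the spectrum of `H`, the function `t ↦ (λ - t)⁻¹` is continuous on the
spectrum, so the continuous functional calculus produces a self-adjoint
`R` commuting with `B = λ - H` and satisfying `B R B = B`. All of `H`, `B`, `R` commute with `B`,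
hence preserve `ker B = V` and, being self-adjoint, also `K = Vᗮ`. For `y ∈ K` the vector
`B R y - y` then lies in `K ∩ ker B = 0`, so `B` maps `K` onto `K`; it is injective on `K`
because `K ∩ V = 0`, and a bijective bounded operator on a Banach space is invertible.
-/

open ContinuousLinearMap Filter Topology Module

theorem continuousOn_inv_sub_of_inter_ball_subset {𝕜 : Type*} [NormedField 𝕜] {s : Set 𝕜}
    {lam : 𝕜} {ε : ℝ} (hε : 0 < ε) (hs : s ∩ Metric.ball lam ε ⊆ {lam}) :
    ContinuousOn (fun t => (lam - t)⁻¹) s := by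
  intro t ht
  by_cases htl : t = lam
  · subst htl
    have hpure : 𝓝[s] t ≤ pure t :=
      le_pure_iff.2 <| mem_nhdsWithin.2
        ⟨_, Metric.isOpen_ball, Metric.mem_ball_self hε, Set.inter_comm _ s ▸ hs⟩
    exact (tendsto_pure_nhds _ t).mono_left hpure
  · exact ((continuousAt_const.sub continuousAt_id).inv₀
      (sub_ne_zero.2 (Ne.symm htl))).continuousWithinAt

theorem IsSelfAdjoint.exists_commute_mul_mul_eq_algebraMap_sub {A : Type*} [Ring A] [StarRing A]
    [Algebra ℝ A] [TopologicalSpace A] [ContinuousFunctionalCalculus ℝ A IsSelfAdjoint]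
    {a : A} (ha : IsSelfAdjoint a) {lam : ℝ}
    (hcont : ContinuousOn (fun t => (lam - t)⁻¹) (spectrum ℝ a)) :
    ∃ r : A, IsSelfAdjoint r ∧ Commute (algebraMap ℝ A lam - a) r ∧
      (algebraMap ℝ A lam - a) * r * (algebraMap ℝ A lam - a) = algebraMap ℝ A lam - a := by
  have hb : cfc (fun t => lam - t) a = algebraMap ℝ A lam - a := by
    rw [cfc_sub (fun _ => lam) (fun t => t) a, cfc_const lam a, cfc_id' ℝ a]
  -- `(lam - t)⁻¹` is the junk value `0` at `t = lam`, where `x * x⁻¹ * x = x` still holds.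
  refine ⟨cfc (fun t => (lam - t)⁻¹) a, cfc_predicate _ a, hb ▸ cfc_commute_cfc _ _ a, ?_⟩
  rw [← hb, ← cfc_mul .., ← cfc_mul ..]
  exact cfc_congr fun t _ => mul_inv_mul_cancel (lam - t)

section

variable {𝕜 E : Type*} [RCLike 𝕜] [NormedAddCommGroup E] [InnerProductSpace 𝕜 E]
  [CompleteSpace E]

theorem IsSelfAdjoint.orthogonal_ker_mem_invtSubmodule {T b : E →L[𝕜] E} (hT : IsSelfAdjoint T)
    (hTb : Commute T b) : (LinearMap.ker (b : E →ₗ[𝕜] E))ᗮ ∈ End.invtSubmodule T.toLinearMap := by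
  refine orthogonal_mem_invtSubmodule ?_
  rw [hT.adjoint_eq, End.mem_invtSubmodule_iff_forall_mem_of_mem]
  intro x hx
  simp only [LinearMap.mem_ker, coe_coe] at hx ⊢
  rw [← mul_apply_eq_comp, ← hTb.eq, mul_apply_eq_comp, hx, map_zero]

theorem apply_apply_eq_of_mul_mul_eq_self {b r : E →L[𝕜] E} (hb : IsSelfAdjoint b)
    (hr : IsSelfAdjoint r) (hbr : Commute b r) (hbrb : b * r * b = b) {y : E}
    (hy : y ∈ (LinearMap.ker (b : E →ₗ[𝕜] E))ᗮ) : b (r y) = y := by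
  have hker : b (r y) - y ∈ LinearMap.ker (b : E →ₗ[𝕜] E) := by
    rw [LinearMap.mem_ker, coe_coe, map_sub, ← mul_apply_eq_comp b, ← mul_apply_eq_comp,
      mul_assoc, hbr.eq, ← mul_assoc, hbrb, sub_self]
  have horth : b (r y) - y ∈ (LinearMap.ker (b : E →ₗ[𝕜] E))ᗮ :=
    sub_mem (hb.orthogonal_ker_mem_invtSubmodule (Commute.refl b)
      (hr.orthogonal_ker_mem_invtSubmodule hbr.symm hy)) hy
  exact sub_eq_zero.1 (Submodule.disjoint_def.1 (Submodule.orthogonal_disjoint _) _ hker horth)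

theorem isUnit_of_coe_apply_eq_of_mul_mul_eq_self {b r : E →L[𝕜] E} (hb : IsSelfAdjoint b)
    (hr : IsSelfAdjoint r) (hbr : Commute b r) (hbrb : b * r * b = b)
    {b' : (LinearMap.ker (b : E →ₗ[𝕜] E))ᗮ →L[𝕜] (LinearMap.ker (b : E →ₗ[𝕜] E))ᗮ}
    (hb' : ∀ x, (b' x : E) = b x) : IsUnit b' := by
  rw [isUnit_iff_bijective]
  constructor
  · refine (injective_iff_map_eq_zero b').2 fun x hx => Subtype.ext ?_
    have hker : (x : E) ∈ LinearMap.ker (b : E →ₗ[𝕜] E) := by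
      rw [LinearMap.mem_ker, coe_coe, ← hb', hx, Submodule.coe_zero]
    exact Submodule.disjoint_def.1 (Submodule.orthogonal_disjoint _) _ hker x.2
  · intro y
    refine ⟨⟨r y, hr.orthogonal_ker_mem_invtSubmodule hbr.symm y.2⟩, Subtype.ext ?_⟩
    rw [hb']
    exact apply_apply_eq_of_mul_mul_eq_self hb hr hbr hbrb y.2

end

theorem isolated_eigenvalue_not_in_spectrum_of_restriction_general
    {ℋ : Type*} [NormedAddCommGroup ℋ] [InnerProductSpace ℂ ℋ] [CompleteSpace ℋ]
    (H : ℋ →L[ℂ] ℋ) (hH : IsSelfAdjoint H) (lam : ℝ)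
    (hiso : ∃ ε > 0,
      spectrum ℂ H ∩ (Complex.ofReal '' Set.Ioo (lam - ε) (lam + ε)) = {(lam : ℂ)})
    (V K : Submodule ℂ ℋ)
    (hV : V = LinearMap.ker ((H - (lam : ℂ) • (1 : ℋ →L[ℂ] ℋ) : ℋ →L[ℂ] ℋ) : ℋ →ₗ[ℂ] ℋ))
    (hK : K = Vᗮ) :
    (∀ x ∈ K, H x ∈ K) ∧
    ∀ H' : K →L[ℂ] K, (∀ x : K, (H' x : ℋ) = H x) → (lam : ℂ) ∉ spectrum ℂ H' := by
  obtain ⟨ε, hε, hspec⟩ := hiso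
  set b : ℋ →L[ℂ] ℋ := algebraMap ℝ (ℋ →L[ℂ] ℋ) lam - H
  have hb : IsSelfAdjoint b := (IsSelfAdjoint.algebraMap _ (.all lam)).sub hH
  have hKb : K = (LinearMap.ker (b : ℋ →ₗ[ℂ] ℋ))ᗮ := by
    rw [hK, hV, ← LinearMap.ker_neg]
    congr 2
    ext x
    simp [b, Algebra.algebraMap_eq_smul_one]
  have hisoR : spectrum ℝ H ∩ Metric.ball lam ε ⊆ {lam} := by
    rintro t ⟨ht, htε⟩
    rw [Real.ball_eq_Ioo] at htε
    have : (t : ℂ) ∈ spectrum ℂ H ∩ (Complex.ofReal '' Set.Ioo (lam - ε) (lam + ε)) :=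
      ⟨spectrum.algebraMap_mem ℂ ht, t, htε, rfl⟩
    rw [hspec] at this
    exact Complex.ofReal_injective this
  obtain ⟨r, hr, hbr, hbrb⟩ :=
    hH.exists_commute_mul_mul_eq_algebraMap_sub
      (continuousOn_inv_sub_of_inter_ball_subset hε hisoR)
  subst hKb
  refine ⟨fun x hx => hH.orthogonal_ker_mem_invtSubmodule
    ((Algebra.commute_algebraMap_right lam H).sub_right (Commute.refl H)) hx, fun H' hH' => ?_⟩
  rw [spectrum.mem_iff, not_not]
  refine isUnit_of_coe_apply_eq_of_mul_mul_eq_self hb hr hbr hbrb fun x => ?_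
  simp [b, Algebra.algebraMap_eq_smul_one, hH']

/-- If `lam` is an isolated point of the spectrum of the bounded self-adjoint operator `H`,
`V = ker (H - lam)` and `K = Vᗮ`, then `K` is invariant under `H` and `lam` is not in the
spectrum of the restriction of `H` to `K`. -/
theorem isolated_eigenvalue_not_in_spectrum_of_restriction
    {ℋ : Type*} [NormedAddCommGroup ℋ] [InnerProductSpace ℂ ℋ] [CompleteSpace ℋ]
    (H : ℋ →L[ℂ] ℋ) (hH : IsSelfAdjoint H) (lam : ℝ)
    (hmem : (lam : ℂ) ∈ spectrum ℂ H)
    (hiso : ∃ ε > 0,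
      spectrum ℂ H ∩ (Complex.ofReal '' Set.Ioo (lam - ε) (lam + ε)) = {(lam : ℂ)})
    (V K : Submodule ℂ ℋ)
    (hV : V = LinearMap.ker ((H - (lam : ℂ) • (1 : ℋ →L[ℂ] ℋ) : ℋ →L[ℂ] ℋ) : ℋ →ₗ[ℂ] ℋ))
    (hK : K = Vᗮ) :
    (∀ x ∈ K, H x ∈ K) ∧
    ∀ H' : K →L[ℂ] K, (∀ x : K, (H' x : ℋ) = H x) → (lam : ℂ) ∉ spectrum ℂ H' :=
  isolated_eigenvalue_not_in_spectrum_of_restriction_general H hH lam hiso V K hV hK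
end

section
/- (Sokhotski–Plemelj formula.) Let λ ∈ ℝ, let α ∈ (0, 1], and let φ : ℝ → ℝ be a bounded measurable real-valued function with compact support satisfying the Hölder condition |φ(x) − φ(λ)| ≤ C·|x−λ|^α for all x ∈ ℝ. Then there exists L ∈ ℂ such that ∫_ℝ φ(x)/(x − λ − iy) dx tends to L as y → 0 from the right, and the imaginary part of L equals π · φ(λ). -/
open Filter Topology MeasureTheory Complex Set Bornology
open scoped Real

/-!
Split `φ x = (φ x - φ lam) + φ lam` on an interval `[lam - R, lam + R]` containing the support
of `φ`. The Hölder part is dominated by `C |x - lam| ^ (α - 1)`, which is integrable because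
`α > 0`, uniformly in `y`; by dominated convergence its integral is continuous at `y = 0`, where
it is real. The constant part integrates to `φ lam (log (R - i y) - log (-R - i y))`, and as
`y → 0⁺` the second logarithm approaches the branch cut from below, which contributes `φ lam · π i`.
-/

lemma Bornology.IsBounded.exists_pos_subset_Ioc {s : Set ℝ} (hs : IsBounded s) (c : ℝ) :
    ∃ R > 0, s ⊆ Ioc (c - R) (c + R) := by
  obtain ⟨r, hr⟩ := hs.subset_closedBall c
  refine ⟨|r| + 1, by positivity, hr.trans ?_⟩
  rw [Real.closedBall_eq_Icc]
  exact Icc_subset_Ioc (by linarith [le_abs_self r]) (by linarith [le_abs_self r])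

lemma intervalIntegrable_abs_sub_rpow {β : ℝ} (hβ : -1 < β) (c a b : ℝ) :
    IntervalIntegrable (fun x : ℝ => |x - c| ^ β) volume a b := by
  have hloc : LocallyIntegrable (fun x : ℝ => |x| ^ β) volume :=
    locallyIntegrable_of_norm_le_rpow (α := -β) (C := 1) (by simp) (by simp only [Module.finrank_self, Nat.cast_one]; linarith)
      (ae_of_all _ fun x => by simp [abs_of_nonneg (Real.rpow_nonneg (abs_nonneg x) β)])
      (continuous_abs.measurable.pow_const β).aestronglyMeasurable
  simpa using ((hloc.integrableOn_isCompact isCompact_uIcc).intervalIntegrable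
    (a := a - c) (b := b - c)).comp_sub_right c

lemma ofReal_sub_ofReal_sub_mul_I_ne_zero {x lam y : ℝ} (h : x ≠ lam ∨ y ≠ 0) :
    (x : ℂ) - lam - y * I ≠ 0 := by
  intro h0
  have hre : x - lam = 0 := by simpa using congrArg re h0
  have him : y = 0 := by simpa using congrArg im h0
  exact h.elim (· (sub_eq_zero.mp hre)) (· him)

lemma integral_inv_ofReal_sub_sub_mul_I (lam a b : ℝ) {y : ℝ} (hy : y ≠ 0) :
    ∫ x in a..b, ((x : ℂ) - lam - y * I)⁻¹
      = log ((b : ℂ) - lam - y * I) - log ((a : ℂ) - lam - y * I) := by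
  refine intervalIntegral.integral_eq_sub_of_hasDerivAt
    (f := fun t : ℝ => log ((t : ℂ) - lam - y * I)) (fun x _ => ?_) ?_
  · have hslit : (x : ℂ) - lam - y * I ∈ slitPlane := Or.inr (by simp [hy])
    simpa using (((hasDerivAt_id x).ofReal_comp.sub_const (lam : ℂ)).sub_const
      ((y : ℂ) * I)).clog_real hslit
  · exact (Continuous.inv₀ (by fun_prop)
      fun x => ofReal_sub_ofReal_sub_mul_I_ne_zero (.inr hy)).intervalIntegrable a b

lemma tendsto_log_sub_log_sub_mul_I {R : ℝ} (hR : 0 < R) :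
    Tendsto (fun y : ℝ => log ((R : ℂ) - y * I) - log ((-R : ℂ) - y * I)) (𝓝[>] 0)
      (𝓝 (π * I)) := by
  have hline : ∀ c : ℂ, Tendsto (fun y : ℝ => c - y * I) (𝓝[>] 0) (𝓝 c) := fun c =>
    ((Continuous.tendsto' (by fun_prop) (0 : ℝ) c (by simp))).mono_left nhdsWithin_le_nhds
  have hright : Tendsto (fun y : ℝ => log ((R : ℂ) - y * I)) (𝓝[>] 0) (𝓝 (Real.log R)) := by
    rw [ofReal_log hR.le]
    exact (continuousAt_clog (by simp [hR])).tendsto.comp (hline R)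
  have hleft : Tendsto (fun y : ℝ => log ((-R : ℂ) - y * I)) (𝓝[>] 0)
      (𝓝 (Real.log R - π * I)) := by
    have hbelow : Tendsto (fun y : ℝ => (-R : ℂ) - y * I) (𝓝[>] 0)
        (𝓝[{z : ℂ | z.im < 0}] (-R : ℂ)) :=
      tendsto_nhdsWithin_iff.mpr ⟨hline _, by
        filter_upwards [self_mem_nhdsWithin] with y (hy : 0 < y) using by simpa using hy⟩
    simpa [abs_of_pos hR, Function.comp_def] using
      (tendsto_log_nhdsWithin_im_neg_of_re_neg_of_im_zero (by simpa using hR) (by simp)).comp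
        hbelow
  simpa using hright.sub hleft

lemma tendsto_integral_inv_ofReal_sub_sub_mul_I (lam : ℝ) {R : ℝ} (hR : 0 < R) :
    Tendsto (fun y : ℝ => ∫ x in (lam - R)..(lam + R), ((x : ℂ) - lam - y * I)⁻¹) (𝓝[>] 0)
      (𝓝 (π * I)) := by
  refine (tendsto_log_sub_log_sub_mul_I hR).congr' ?_
  filter_upwards [self_mem_nhdsWithin] with y (hy : 0 < y)
  rw [integral_inv_ofReal_sub_sub_mul_I lam _ _ hy.ne']
  push_cast
  ring_nf

section Holder

variable {φ : ℝ → ℝ} {lam α C : ℝ}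

lemma norm_holder_div_le (hφ : ∀ x, |φ x - φ lam| ≤ C * |x - lam| ^ α) {x : ℝ} (hx : x ≠ lam)
    (y : ℝ) : ‖((φ x : ℂ) - φ lam) / ((x : ℂ) - lam - y * I)‖ ≤ C * |x - lam| ^ (α - 1) := by
  have hpos : 0 < |x - lam| := abs_pos.mpr (sub_ne_zero.mpr hx)
  have hre : |x - lam| ≤ ‖(x : ℂ) - lam - y * I‖ := by
    simpa using abs_re_le_norm ((x : ℂ) - lam - y * I)
  rw [norm_div, ← ofReal_sub, norm_real, Real.norm_eq_abs]
  calc |φ x - φ lam| / ‖(x : ℂ) - lam - y * I‖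
      ≤ |φ x - φ lam| / |x - lam| := div_le_div_of_nonneg_left (abs_nonneg _) hpos hre
    _ ≤ C * |x - lam| ^ α / |x - lam| := by gcongr; exact hφ x
    _ = C * |x - lam| ^ (α - 1) := by rw [Real.rpow_sub hpos, Real.rpow_one, mul_div_assoc]

lemma intervalIntegrable_holder_div (hmeas : Measurable φ) (hα : 0 < α)
    (hφ : ∀ x, |φ x - φ lam| ≤ C * |x - lam| ^ α) (y a b : ℝ) :
    IntervalIntegrable (fun x : ℝ => ((φ x : ℂ) - φ lam) / ((x : ℂ) - lam - y * I)) volume a b :=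
  ((intervalIntegrable_abs_sub_rpow (by linarith) lam a b).const_mul C).mono_fun'
    (Measurable.aestronglyMeasurable (by fun_prop))
    (ae_restrict_of_ae ((Measure.ae_ne volume lam).mono fun x hx => norm_holder_div_le hφ hx y))

lemma continuous_integral_holder_div (hmeas : Measurable φ) (hα : 0 < α)
    (hφ : ∀ x, |φ x - φ lam| ≤ C * |x - lam| ^ α) (a b : ℝ) :
    Continuous fun y : ℝ => ∫ x in a..b, ((φ x : ℂ) - φ lam) / ((x : ℂ) - lam - y * I) :=
  intervalIntegral.continuous_of_dominated_interval
    (fun _ => Measurable.aestronglyMeasurable (by fun_prop))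
    (fun y => (Measure.ae_ne volume lam).mono fun x hx _ => norm_holder_div_le hφ hx y)
    ((intervalIntegrable_abs_sub_rpow (by linarith) lam a b).const_mul C)
    ((Measure.ae_ne volume lam).mono fun x hx _ => continuous_const.div (by fun_prop)
      fun _ => ofReal_sub_ofReal_sub_mul_I_ne_zero (.inl hx))

lemma tendsto_integral_holder_div (hmeas : Measurable φ) (hα : 0 < α)
    (hφ : ∀ x, |φ x - φ lam| ≤ C * |x - lam| ^ α) (a b : ℝ) :
    Tendsto (fun y : ℝ => ∫ x in a..b, ((φ x : ℂ) - φ lam) / ((x : ℂ) - lam - y * I)) (𝓝 0)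
      (𝓝 ((∫ x in a..b, (φ x - φ lam) / (x - lam) : ℝ) : ℂ)) := by
  convert (continuous_integral_holder_div hmeas hα hφ a b).tendsto 0 using 2
  rw [← intervalIntegral.integral_ofReal]
  push_cast
  simp

lemma integral_div_eq_integral_holder_div_add (hmeas : Measurable φ) (hα : 0 < α)
    (hφ : ∀ x, |φ x - φ lam| ≤ C * |x - lam| ^ α) {a b : ℝ} (hsupp : Function.support φ ⊆ Ioc a b)
    {y : ℝ} (hy : y ≠ 0) :
    ∫ x, (φ x : ℂ) / ((x : ℂ) - lam - y * I)
      = (∫ x in a..b, ((φ x : ℂ) - φ lam) / ((x : ℂ) - lam - y * I))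
        + φ lam * ∫ x in a..b, ((x : ℂ) - lam - y * I)⁻¹ := by
  have hinv : IntervalIntegrable (fun x : ℝ => ((x : ℂ) - lam - y * I)⁻¹) volume a b :=
    (Continuous.inv₀ (by fun_prop)
      fun x => ofReal_sub_ofReal_sub_mul_I_ne_zero (.inr hy)).intervalIntegrable a b
  rw [← intervalIntegral.integral_eq_integral_of_support_subset
      (fun x hx => hsupp fun h => hx (by simp [h])),
    ← intervalIntegral.integral_const_mul,
    ← intervalIntegral.integral_add (intervalIntegrable_holder_div hmeas hα hφ y a b)
      (hinv.const_mul _)]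
  congr 1 with x
  ring

end Holder

theorem sokhotski_plemelj_general
    (lam : ℝ) (α : ℝ) (hα : α ∈ Set.Ioc (0 : ℝ) 1)
    (φ : ℝ → ℝ) (hmeas : Measurable φ)
    (hsupp : HasCompactSupport φ)
    (C : ℝ)
    (hHolder : ∀ x : ℝ, |φ x - φ lam| ≤ C * |x - lam| ^ α) :
    ∃ L : ℂ,
      Tendsto
        (fun y : ℝ => ∫ x : ℝ, (φ x : ℂ) / ((x : ℂ) - (lam : ℂ) - (y : ℂ) * Complex.I))
        (𝓝[>] 0) (𝓝 L) ∧
      L.im = Real.pi * φ lam := by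
  obtain ⟨R, hR, hsuppR⟩ :=
    (hsupp.isBounded.subset (subset_tsupport φ)).exists_pos_subset_Ioc lam
  refine ⟨(∫ x in (lam - R)..(lam + R), (φ x - φ lam) / (x - lam) : ℝ) + φ lam * (π * I),
    ?_, by simp [mul_comm]⟩
  have hlim := ((tendsto_integral_holder_div hmeas hα.1 hHolder (lam - R) (lam + R)).mono_left
    nhdsWithin_le_nhds).add ((tendsto_integral_inv_ofReal_sub_sub_mul_I lam hR).const_mul
      (φ lam : ℂ))
  refine hlim.congr' ?_
  filter_upwards [self_mem_nhdsWithin] with y (hy : 0 < y)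
  exact (integral_div_eq_integral_holder_div_add hmeas hα.1 hHolder hsuppR hy.ne').symm

/-- Sokhotski–Plemelj formula: if `φ : ℝ → ℝ` is bounded, measurable, compactly supported
and Hölder at `lam` with exponent `α ∈ (0, 1]`, then `∫ φ(x) / (x - lam - i y) dx` converges
to some `L ∈ ℂ` as `y → 0⁺`, and `Im L = π · φ(lam)`. -/
theorem sokhotski_plemelj
    (lam : ℝ) (α : ℝ) (hα : α ∈ Set.Ioc (0 : ℝ) 1)
    (φ : ℝ → ℝ) (hmeas : Measurable φ)
    (hbdd : ∃ M : ℝ, ∀ x : ℝ, |φ x| ≤ M) (hsupp : HasCompactSupport φ)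
    (C : ℝ) (hC : 0 ≤ C)
    (hHolder : ∀ x : ℝ, |φ x - φ lam| ≤ C * |x - lam| ^ α) :
    ∃ L : ℂ,
      Tendsto
        (fun y : ℝ => ∫ x : ℝ, (φ x : ℂ) / ((x : ℂ) - (lam : ℂ) - (y : ℂ) * Complex.I))
        (𝓝[>] 0) (𝓝 L) ∧
      L.im = Real.pi * φ lam :=
  sokhotski_plemelj_general lam α hα φ hmeas hsupp C hHolder
end
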